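/- Let (Ω, 𝔽, ℙ) be a probability space carrying, for each n, real random variables A_n, B_n, Φ̂_n, Ψ̂_n, ρ̂_n. Let Δ, C̃ ∈ ℝ, let (𝒞_n) be a real sequence with 𝒞_n → C̃, and let Φ₁ᵇ > 0, Ψᵇ > 0, and ρ₀ := Φ₁₂ᵇ/√(Φ₁ᵇΨᵇ) ∈ (−1,1). Assume: (i) the laws of (A_n − Δ²𝒞_n, B_n − Δ𝒞_n) converge weakly to the law of (√Φ₁ᵇ·Z₁, √Ψᵇ·(ρ₀Z₁ + √(1−ρ₀²)·Z₂)) for Z₁, Z₂ independent standard normal (the centered bivariate normal with variances Φ₁ᵇ, Ψᵇ and correlation ρ₀); (ii) Φ̂_n → Φ₁ᵇ, Ψ̂_n → Ψᵇ, and ρ̂_n → ρ₀ in probability. Define AR_n := A_n/√Φ̂_n, LM_n := B_n/√Ψ̂_n, and LM*_n := (LM_n − ρ̂_n·AR_n)/√(1−ρ̂_n²). Then the laws of (AR_n, LM*_n) converge weakly to the product of the normal distribution with mean m₁(Δ) and variance 1 and the normal distribution with mean m₂(Δ) and variance 1, where m₁(Δ) = (Φ₁ᵇ)^{−1/2}Δ²C̃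 and m₂(Δ) = (1−ρ₀²)^{−1/2}·((Ψᵇ)^{−1/2}ΔC̃ − ρ₀(Φ₁ᵇ)^{−1/2}Δ²C̃). -/

import Mathlib

/-!
Slutsky's theorem does all the work. Adding back the deterministic drift `(Δ²𝒞ₙ, Δ𝒞ₙ) → (Δ²C̃, ΔC̃)`
gives `(Aₙ, Bₙ) ⇒ T Z + (Δ²C̃, ΔC̃)`, where `Z` is a standard bivariate normal and `T` is the
Cholesky factor of the null covariance. The estimators converge in probability to
`(Φ₁ᵇ, Ψᵇ, ρ₀)`, and the map `(a, b, φ, ψ, r) ↦ (AR, LM*)` is continuous near that point. At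
that point it inverts `T`, so the limit is `Z` shifted by `(m₁(Δ), m₂(Δ))`.
-/

open MeasureTheory ProbabilityTheory Filter BoundedContinuousFunction
open scoped ProbabilityTheory Real Topology

namespace MeasureTheory

variable {ι Ω Ω' E F : Type*} {mΩ : MeasurableSpace Ω} {mΩ' : MeasurableSpace Ω'}
  {μ : Measure Ω} {μ' : Measure Ω'} {l : Filter ι}

theorem TendstoInMeasure.prodMk [PseudoEMetricSpace E] [PseudoEMetricSpace F]
    {f : ι → Ω → E} {g : ι → Ω → F} {f₀ : Ω → E} {g₀ : Ω → F}
    (hf : TendstoInMeasure μ f l f₀) (hg : TendstoInMeasure μ g l g₀) :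
    TendstoInMeasure μ (fun i ω ↦ (f i ω, g i ω)) l (fun ω ↦ (f₀ ω, g₀ ω)) := by
  intro ε hε
  have hsum := (hf ε hε).add (hg ε hε)
  rw [add_zero] at hsum
  refine tendsto_of_tendsto_of_tendsto_of_le_of_le tendsto_const_nhds hsum (fun _ ↦ bot_le)
    fun i ↦ (measure_mono fun ω hω ↦ ?_).trans (measure_union_le _ _)
  simpa [Prod.edist_eq, le_max_iff] using hω

theorem tendstoInMeasure_const_of_tendsto [PseudoEMetricSpace E] {a : ι → E} {a₀ : E}
    (ha : Tendsto a l (𝓝 a₀)) : TendstoInMeasure μ (fun i (_ : Ω) ↦ a i) l fun _ ↦ a₀ := by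
  intro ε hε
  refine tendsto_const_nhds.congr' ?_
  filter_upwards [EMetric.tendsto_nhds.1 ha ε hε] with i hi
  simp [not_le.2 hi]

theorem tendstoInMeasure_sub_of_eq_of_mem_ball [SeminormedAddCommGroup F] [PseudoMetricSpace E]
    {U V : ι → Ω → F} {Y : ι → Ω → E} {c : E} {r : ℝ} (hr : 0 < r)
    (hY : TendstoInMeasure μ Y l fun _ ↦ c)
    (hUV : ∀ i ω, Y i ω ∈ Metric.ball c r → U i ω = V i ω) :
    TendstoInMeasure μ (U - V) l 0 := by
  intro ε hε
  refine tendsto_of_tendsto_of_tendsto_of_le_of_le tendsto_const_nhds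
    (hY (ENNReal.ofReal r) (by simpa using hr)) (fun _ ↦ bot_le)
    fun i ↦ measure_mono fun ω hω ↦ ?_
  by_contra hfar
  have hnear : Y i ω ∈ Metric.ball c r := by
    simpa [edist_dist, ENNReal.ofReal_lt_ofReal_iff_of_nonneg dist_nonneg] using hfar
  simp only [Set.mem_ofPred_eq, Pi.sub_apply, hUV i ω hnear, sub_self, Pi.zero_apply,
    edist_self] at hω
  exact hε.not_ge hω

theorem tendstoInDistribution_iff_forall_integral_tendsto [TopologicalSpace E] [MeasurableSpace E]
    [OpensMeasurableSpace E] [IsProbabilityMeasure μ] [IsProbabilityMeasure μ']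
    {X : ι → Ω → E} {Z : Ω' → E}
    (hX : ∀ i, AEMeasurable (X i) μ) (hZ : AEMeasurable Z μ') :
    TendstoInDistribution X l Z (fun _ ↦ μ) μ' ↔
      ∀ f : E →ᵇ ℝ, Tendsto (fun i ↦ ∫ ω, f (X i ω) ∂μ) l (𝓝 (∫ ω, f (Z ω) ∂μ')) := by
  have hlaw : ∀ f : E →ᵇ ℝ, (fun i ↦ ∫ x, f x ∂(μ.map (X i))) = fun i ↦ ∫ ω, f (X i ω) ∂μ :=
    fun f ↦ funext fun i ↦ integral_map (hX i) f.continuous.aestronglyMeasurable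
  have hlim : ∀ f : E →ᵇ ℝ, ∫ x, f x ∂(μ'.map Z) = ∫ ω, f (Z ω) ∂μ' :=
    fun f ↦ integral_map hZ f.continuous.aestronglyMeasurable
  constructor
  · intro h f
    simpa only [ProbabilityMeasure.coe_mk, hlaw, hlim] using
      ProbabilityMeasure.tendsto_iff_forall_integral_tendsto.1 h.tendsto f
  · intro h
    refine ⟨hX, hZ, ProbabilityMeasure.tendsto_iff_forall_integral_tendsto.2 fun f ↦ ?_⟩
    simpa only [ProbabilityMeasure.coe_mk, hlaw, hlim] using h f

variable [SeminormedAddCommGroup E] [SecondCountableTopology E] [MeasurableSpace E] [BorelSpace E]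
  {E' : Type*} [SeminormedAddCommGroup E'] [SecondCountableTopology E'] [MeasurableSpace E']
  [BorelSpace E'] [SeminormedAddCommGroup F] [SecondCountableTopology F] [MeasurableSpace F]
  [BorelSpace F] [IsProbabilityMeasure μ] [IsProbabilityMeasure μ'] [l.IsCountablyGenerated]

theorem TendstoInDistribution.of_sub_of_tendsto {X : ι → Ω → E} {Z : Ω' → E} {a : ι → E} {a₀ : E}
    (hXa : TendstoInDistribution (fun i ω ↦ X i ω - a i) l Z (fun _ ↦ μ) μ')
    (ha : Tendsto a l (𝓝 a₀)) :
    TendstoInDistribution X l (fun ω ↦ Z ω + a₀) (fun _ ↦ μ) μ' := by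
  refine (hXa.add_of_tendstoInMeasure_const (tendstoInMeasure_const_of_tendsto ha)
    fun _ ↦ aemeasurable_const).congr
      (fun i ↦ ae_of_all _ fun ω ↦ sub_add_cancel (X i ω) (a i)) (ae_of_all _ fun _ ↦ rfl)

theorem TendstoInDistribution.comp_prodMk_of_tendstoInMeasure_const_of_eq_continuous
    {g G : E × E' → F} (hG : Continuous G) {c : E'} {r : ℝ} (hr : 0 < r)
    (hgG : ∀ x y, y ∈ Metric.ball c r → g (x, y) = G (x, y))
    {X : ι → Ω → E} {Y : ι → Ω → E'} {Z : Ω' → E}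
    (hXZ : TendstoInDistribution X l Z (fun _ ↦ μ) μ')
    (hY : TendstoInMeasure μ Y l fun _ ↦ c) (hY_meas : ∀ i, AEMeasurable (Y i) μ)
    (hg_meas : ∀ i, AEMeasurable (fun ω ↦ g (X i ω, Y i ω)) μ) :
    TendstoInDistribution (fun i ω ↦ g (X i ω, Y i ω)) l (fun ω ↦ g (Z ω, c))
      (fun _ ↦ μ) μ' := by
  have hG_lim := hXZ.continuous_comp_prodMk_of_tendstoInMeasure_const hG hY hY_meas
  simp only [hgG _ c (Metric.mem_ball_self hr)]
  exact tendstoInDistribution_of_tendstoInMeasure_sub _ _ hG_lim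
    (tendstoInMeasure_sub_of_eq_of_mem_ball hr hY fun i ω h ↦ hgG _ _ h) hg_meas

end MeasureTheory

/-- `(AR, LM*)` as a function of `(A, B)` and of the estimates `(Φ̂, Ψ̂, ρ̂)`. -/
noncomputable def arLMStar (ab : ℝ × ℝ) (q : ℝ × ℝ × ℝ) : ℝ × ℝ :=
  (ab.1 / √q.1, (ab.2 / √q.2.1 - q.2.2 * (ab.1 / √q.1)) / √(1 - q.2.2 ^ 2))

theorem continuousOn_arLMStar :
    ContinuousOn (fun p : (ℝ × ℝ) × (ℝ × ℝ × ℝ) ↦ arLMStar p.1 p.2)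
      {p | 0 < p.2.1 ∧ 0 < p.2.2.1 ∧ p.2.2.2 ^ 2 < 1} := by
  unfold arLMStar
  fun_prop (disch := rintro p ⟨hφ, hψ, hr⟩; exact (Real.sqrt_pos.2 (by linarith)).ne')

theorem measurable_arLMStar : Measurable fun p : (ℝ × ℝ) × (ℝ × ℝ × ℝ) ↦ arLMStar p.1 p.2 := by
  unfold arLMStar
  fun_prop

def clampNear (c η x : ℝ) : ℝ := max (c - η) (min x (c + η))

@[fun_prop]
theorem continuous_clampNear (c η : ℝ) : Continuous (clampNear c η) := by
  unfold clampNear; fun_prop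

theorem clampNear_of_dist_le {c η x : ℝ} (h : dist x c ≤ η) : clampNear c η x = x := by
  rw [Real.dist_eq, abs_le] at h
  rw [clampNear, min_eq_left (by linarith), max_eq_right (by linarith)]

theorem abs_clampNear_sub_le {c η : ℝ} (hη : 0 ≤ η) (x : ℝ) : |clampNear c η x - c| ≤ η := by
  rw [abs_le, clampNear]
  constructor
  · linarith [le_max_left (c - η) (min x (c + η))]
  · exact sub_le_iff_le_add'.2 (max_le (by linarith) (min_le_right _ _))

theorem exists_continuous_eq_arLMStar {c : ℝ × ℝ × ℝ} (h₁ : 0 < c.1) (h₂ : 0 < c.2.1)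
    (h₃ : |c.2.2| < 1) :
    ∃ G : (ℝ × ℝ) × (ℝ × ℝ × ℝ) → ℝ × ℝ, Continuous G ∧ ∃ r > 0,
      ∀ ab q, q ∈ Metric.ball c r → arLMStar ab q = G (ab, q) := by
  obtain ⟨η, hη, hη₁, hη₂, hη₃⟩ : ∃ η > 0, η < c.1 ∧ η < c.2.1 ∧ |c.2.2| + η < 1 := by
    refine ⟨min (min c.1 c.2.1) (1 - |c.2.2|) / 2, by positivity, ?_, ?_, ?_⟩ <;>
      linarith [min_le_left (min c.1 c.2.1) (1 - |c.2.2|),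
        min_le_right (min c.1 c.2.1) (1 - |c.2.2|), min_le_left c.1 c.2.1, min_le_right c.1 c.2.1]
  -- Clamping the estimates to a box of radius `η` around `c` keeps them in the region where
  -- `arLMStar` is continuous, and changes nothing on the ball of radius `η`.
  let clamp : ℝ × ℝ × ℝ → ℝ × ℝ × ℝ := fun q ↦
    (clampNear c.1 η q.1, clampNear c.2.1 η q.2.1, clampNear c.2.2 η q.2.2)
  refine ⟨fun p ↦ arLMStar p.1 (clamp p.2), ?_, η, hη, fun ab q hq ↦ ?_⟩
  · refine continuousOn_arLMStar.comp_continuous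
      (f := fun p : (ℝ × ℝ) × (ℝ × ℝ × ℝ) ↦ (p.1, clamp p.2)) (by fun_prop) fun p ↦ ?_
    have e₁ := abs_le.1 (abs_clampNear_sub_le hη.le (c := c.1) p.2.1)
    have e₂ := abs_le.1 (abs_clampNear_sub_le hη.le (c := c.2.1) p.2.2.1)
    have e₃ := (abs_sub_abs_le_abs_sub _ _).trans (abs_clampNear_sub_le hη.le (c := c.2.2) p.2.2.2)
    exact ⟨by linarith [e₁.1], by linarith [e₂.1], (sq_lt_one_iff_abs_lt_one _).2 (by linarith)⟩
  · rw [Metric.mem_ball, Prod.dist_eq, Prod.dist_eq, max_lt_iff, max_lt_iff] at hq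
    simp only [clamp, clampNear_of_dist_le hq.1.le, clampNear_of_dist_le hq.2.1.le,
      clampNear_of_dist_le hq.2.2.le]

theorem arLMStar_standardize {Φ Ψ ρ : ℝ} (hΦ : 0 < Φ) (hΨ : 0 < Ψ) (hρ : ρ ^ 2 < 1)
    (z ab : ℝ × ℝ) :
    arLMStar ((√Φ * z.1, √Ψ * (ρ * z.1 + √(1 - ρ ^ 2) * z.2)) + ab) (Φ, Ψ, ρ) =
      z + ((√Φ)⁻¹ * ab.1, (√(1 - ρ ^ 2))⁻¹ * ((√Ψ)⁻¹ * ab.2 - ρ * (√Φ)⁻¹ * ab.1)) := by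
  have := Real.sqrt_pos.2 hΦ
  have := Real.sqrt_pos.2 hΨ
  have := Real.sqrt_pos.2 (sub_pos.2 hρ)
  simp only [arLMStar, Prod.fst_add, Prod.snd_add]
  congr 1
  · field_simp
  · field_simp
    ring

theorem map_add_prod_gaussianReal (μ₁ μ₂ : ℝ) (v₁ v₂ : NNReal) (m : ℝ × ℝ) :
    ((gaussianReal μ₁ v₁).prod (gaussianReal μ₂ v₂)).map (· + m) =
      (gaussianReal (μ₁ + m.1) v₁).prod (gaussianReal (μ₂ + m.2) v₂) := by
  rw [show (· + m) = Prod.map (· + m.1) (· + m.2) from rfl, ← Measure.map_prod_map _ _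
    (measurable_add_const _) (measurable_add_const _), gaussianReal_map_add_const,
    gaussianReal_map_add_const]

theorem stmt_8_general {Ω : Type*} [MeasureSpace Ω] [IsProbabilityMeasure (ℙ : Measure Ω)]
    (A B Φhat Ψhat ρhat : ℕ → Ω → ℝ)
    (hmeas : ∀ n, Measurable (A n) ∧ Measurable (B n) ∧ Measurable (Φhat n) ∧
      Measurable (Ψhat n) ∧ Measurable (ρhat n))
    (Δ Ctil : ℝ) (𝒞 : ℕ → ℝ) (h𝒞 : Tendsto 𝒞 atTop (nhds Ctil))
    (Φb Ψb ρ₀ : ℝ) (hΦb : 0 < Φb) (hΨb : 0 < Ψb)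
    (hρ₀ : ρ₀ ∈ Set.Ioo (-1 : ℝ) 1)
    (hweak : ∀ f : (ℝ × ℝ) →ᵇ ℝ,
      Tendsto (fun n => ∫ ω, f (A n ω - Δ ^ 2 * 𝒞 n, B n ω - Δ * 𝒞 n) ∂ℙ) atTop
        (nhds (∫ z : ℝ × ℝ,
          f (Real.sqrt Φb * z.1,
             Real.sqrt Ψb * (ρ₀ * z.1 + Real.sqrt (1 - ρ₀ ^ 2) * z.2))
          ∂((gaussianReal 0 1).prod (gaussianReal 0 1)))))
    (hΦ : TendstoInMeasure ℙ Φhat atTop (fun _ => Φb))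
    (hΨ : TendstoInMeasure ℙ Ψhat atTop (fun _ => Ψb))
    (hρ : TendstoInMeasure ℙ ρhat atTop (fun _ => ρ₀))
    (AR LM LMs : ℕ → Ω → ℝ)
    (hAR : AR = fun n ω => A n ω / Real.sqrt (Φhat n ω))
    (hLM : LM = fun n ω => B n ω / Real.sqrt (Ψhat n ω))
    (hLMs : LMs = fun n ω =>
      (LM n ω - ρhat n ω * AR n ω) / Real.sqrt (1 - (ρhat n ω) ^ 2)) :
    ∀ f : (ℝ × ℝ) →ᵇ ℝ,
      Tendsto (fun n => ∫ ω, f (AR n ω, LMs n ω) ∂ℙ) atTop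
        (nhds (∫ p : ℝ × ℝ, f p
          ∂((gaussianReal ((Real.sqrt Φb)⁻¹ * (Δ ^ 2 * Ctil)) 1).prod
              (gaussianReal ((Real.sqrt (1 - ρ₀ ^ 2))⁻¹ *
                ((Real.sqrt Ψb)⁻¹ * (Δ * Ctil) -
                  ρ₀ * (Real.sqrt Φb)⁻¹ * (Δ ^ 2 * Ctil))) 1)))) := by
  subst hAR hLM hLMs
  choose hA hB hΦm hΨm hρm using hmeas
  have hABm : ∀ n, Measurable fun ω ↦ (A n ω, B n ω) := fun n ↦ (hA n).prodMk (hB n)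
  have hestm : ∀ n, Measurable fun ω ↦ (Φhat n ω, Ψhat n ω, ρhat n ω) :=
    fun n ↦ (hΦm n).prodMk ((hΨm n).prodMk (hρm n))
  have hW : TendstoInDistribution (fun n ω ↦ (A n ω, B n ω) - (Δ ^ 2 * 𝒞 n, Δ * 𝒞 n)) atTop
      (fun z ↦ (√Φb * z.1, √Ψb * (ρ₀ * z.1 + √(1 - ρ₀ ^ 2) * z.2))) (fun _ ↦ ℙ)
      ((gaussianReal 0 1).prod (gaussianReal 0 1)) :=
    (tendstoInDistribution_iff_forall_integral_tendsto
      (fun n ↦ ((hABm n).sub_const _).aemeasurable) (by fun_prop)).2 hweak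
  have hAB := hW.of_sub_of_tendsto ((h𝒞.const_mul _).prodMk_nhds (h𝒞.const_mul _))
  obtain ⟨G, hG, r, hr, hG_eq⟩ :=
    exists_continuous_eq_arLMStar (c := (Φb, Ψb, ρ₀)) hΦb hΨb (abs_lt.2 hρ₀)
  have hstat := hAB.comp_prodMk_of_tendstoInMeasure_const_of_eq_continuous
    (g := fun p ↦ arLMStar p.1 p.2) hG hr hG_eq (hΦ.prodMk (hΨ.prodMk hρ))
    (fun n ↦ (hestm n).aemeasurable)
    (fun n ↦ (measurable_arLMStar.comp ((hABm n).prodMk (hestm n))).aemeasurable)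
  have hρsq : ρ₀ ^ 2 < 1 := (sq_lt_one_iff_abs_lt_one _).2 (abs_lt.2 hρ₀)
  simp only [arLMStar_standardize hΦb hΨb hρsq] at hstat
  intro f
  have hlim := (tendstoInDistribution_iff_forall_integral_tendsto hstat.forall_aemeasurable
    (by fun_prop)).1 hstat f
  rw [← integral_map (by fun_prop) f.continuous.aestronglyMeasurable,
    map_add_prod_gaussianReal] at hlim
  simpa [arLMStar] using hlim

/-- Lemma 4 of the paper, first part: weak identification with fixed
alternatives: the laws of `(AR_n, LM*_n)` converge weakly to the product of two
unit-variance normals with means `m₁(Δ)` and `m₂(Δ)`. -/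
theorem stmt_8 {Ω : Type*} [MeasureSpace Ω] [IsProbabilityMeasure (ℙ : Measure Ω)]
    (A B Φhat Ψhat ρhat : ℕ → Ω → ℝ)
    (hmeas : ∀ n, Measurable (A n) ∧ Measurable (B n) ∧ Measurable (Φhat n) ∧
      Measurable (Ψhat n) ∧ Measurable (ρhat n))
    (Δ Ctil : ℝ) (𝒞 : ℕ → ℝ) (h𝒞 : Tendsto 𝒞 atTop (nhds Ctil))
    (Φb Ψb Φ12b ρ₀ : ℝ) (hΦb : 0 < Φb) (hΨb : 0 < Ψb)
    (hρ₀def : ρ₀ = Φ12b / Real.sqrt (Φb * Ψb)) (hρ₀ : ρ₀ ∈ Set.Ioo (-1 : ℝ) 1)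
    (hweak : ∀ f : (ℝ × ℝ) →ᵇ ℝ,
      Tendsto (fun n => ∫ ω, f (A n ω - Δ ^ 2 * 𝒞 n, B n ω - Δ * 𝒞 n) ∂ℙ) atTop
        (nhds (∫ z : ℝ × ℝ,
          f (Real.sqrt Φb * z.1,
             Real.sqrt Ψb * (ρ₀ * z.1 + Real.sqrt (1 - ρ₀ ^ 2) * z.2))
          ∂((gaussianReal 0 1).prod (gaussianReal 0 1)))))
    (hΦ : TendstoInMeasure ℙ Φhat atTop (fun _ => Φb))
    (hΨ : TendstoInMeasure ℙ Ψhat atTop (fun _ => Ψb))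
    (hρ : TendstoInMeasure ℙ ρhat atTop (fun _ => ρ₀))
    (AR LM LMs : ℕ → Ω → ℝ)
    (hAR : AR = fun n ω => A n ω / Real.sqrt (Φhat n ω))
    (hLM : LM = fun n ω => B n ω / Real.sqrt (Ψhat n ω))
    (hLMs : LMs = fun n ω =>
      (LM n ω - ρhat n ω * AR n ω) / Real.sqrt (1 - (ρhat n ω) ^ 2)) :
    ∀ f : (ℝ × ℝ) →ᵇ ℝ,
      Tendsto (fun n => ∫ ω, f (AR n ω, LMs n ω) ∂ℙ) atTop
        (nhds (∫ p : ℝ × ℝ, f p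
          ∂((gaussianReal ((Real.sqrt Φb)⁻¹ * (Δ ^ 2 * Ctil)) 1).prod
              (gaussianReal ((Real.sqrt (1 - ρ₀ ^ 2))⁻¹ *
                ((Real.sqrt Ψb)⁻¹ * (Δ * Ctil) -
                  ρ₀ * (Real.sqrt Φb)⁻¹ * (Δ ^ 2 * Ctil))) 1)))) :=
  stmt_8_general A B Φhat Ψhat ρhat hmeas Δ Ctil 𝒞 h𝒞 Φb Ψb ρ₀ hΦb hΨb hρ₀ hweak hΦ hΨ hρ AR LM LMs
    hAR hLM hLMs
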